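/- arXiv:1411.3574 — 4 statements merged into one kernel-verified Lean document; each statement's English description precedes it below -/
import Mathlib

section
/- Let k be a field and let D₁ and D₂ be division rings that are k-algebras (so that k maps into the centre of each). Suppose that D₁ is finite-dimensional over its centre Z(D₁), that D₂ is finite-dimensional over its centre Z(D₂), and that dim_{Z(D₁)} D₁ = dim_{Z(D₂)} D₂. If φ : D₁ → D₂ is an injective k-algebra homomorphism, then φ maps Z(D₁) into Z(D₂), i.e. for every a in the centre of D₁, φ(a) lies in the centre of D₂. -/
/-! If `a` is central in `D₁` but `φ a` is not central in `D₂`, then for a basis `(vᵢ)` of `D₁`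
over `Z(D₁)` the `2n` elements `φ vᵢ` and `φ vᵢ * φ a` of `D₂` are linearly independent over
`Z(D₂)`, contradicting `dim D₂ = n`. The independence is a linear-disjointness statement: a relation
`∑ φ vᵢ * cᵢ = 0` with coefficients `cᵢ` in the centralizer of `φ D₁` forces `cᵢ = 0`. Expanding
the `cᵢ` in a basis over `Z(D₁)` reduces this to the case of `Z(D₁)`-independent `cᵢ` with
coefficients in `D₁`, where the classical minimal-relation argument applies: normalising one
coefficient to `1` and taking commutators with `φ d` gives a shorter relation, so all coefficients
are central. -/

open Finset

section

variable {A B ι : Type*} [DivisionRing A] [Ring B] [Fintype ι] {φ : A →+* B}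

theorem eq_zero_of_sum_map_mul_eq_zero_left {c : ι → B}
    (hc : ∀ i, c i ∈ Subring.centralizer (Set.range φ))
    (hc_indep : ∀ z : ι → Subring.center A, ∑ i, φ (z i) * c i = 0 → z = 0)
    {e : ι → A} (he : ∑ i, φ (e i) * c i = 0) : e = 0 := by
  classical
  have hcomm : ∀ i d, φ d * c i = c i * φ d := fun i d => hc i (φ d) ⟨d, rfl⟩
  suffices ∀ s : Finset ι, ∀ e : ι → A, (∀ i ∉ s, e i = 0) →
      ∑ i, φ (e i) * c i = 0 → e = 0 from this univ e (by simp) he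
  intro s
  induction s using Finset.induction_on with
  | empty => intro e he _; ext i; exact he i (notMem_empty i)
  | @insert j s hj ih =>
    intro e hsupp hrel
    by_cases hej : e j = 0
    · refine ih e (fun i hi => ?_) hrel
      by_cases hij : i = j
      · rwa [hij]
      · exact hsupp i (by simp [hij, hi])
    set e' : ι → A := fun i => (e j)⁻¹ * e i with he'_def
    have he'j : e' j = 1 := inv_mul_cancel₀ hej
    have hrel' : ∑ i, φ (e' i) * c i = 0 := by
      simp only [e', map_mul, mul_assoc, ← mul_sum, hrel, mul_zero]
    clear_value e'
    have hcentral : ∀ i, e' i ∈ Subring.center A := by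
      intro i
      rw [Subring.mem_center_iff]
      intro d
      have hcommutator := ih (fun i => d * e' i - e' i * d) (fun i hi => ?_) ?_
      · exact sub_eq_zero.mp (congrFun hcommutator i)
      · by_cases hij : i = j
        · simp [hij, he'j]
        · simp [he'_def, hsupp i (by simp [hij, hi])]
      · calc ∑ i, φ (d * e' i - e' i * d) * c i
            = φ d * ∑ i, φ (e' i) * c i - (∑ i, φ (e' i) * c i) * φ d := by
              rw [mul_sum, sum_mul, ← sum_sub_distrib]
              refine sum_congr rfl fun i _ => ?_
              rw [map_sub, map_mul, map_mul, sub_mul, mul_assoc, mul_assoc, hcomm i d,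
                mul_assoc (φ (e' i)) (c i)]
          _ = 0 := by rw [hrel', mul_zero, zero_mul, sub_zero]
    have := congrFun (hc_indep (fun i => ⟨e' i, hcentral i⟩) hrel') j
    simp [he'j] at this

theorem eq_zero_of_sum_map_mul_eq_zero_right {v : ι → A}
    (hv : LinearIndependent (Subring.center A) v) {c : ι → B}
    (hc : ∀ i, c i ∈ Subring.centralizer (Set.range φ)) (h : ∑ i, φ (v i) * c i = 0) :
    c = 0 := by
  let _ : Module (Subring.center A) B := Module.compHom B (φ.comp (Subring.center A).subtype)
  obtain ⟨s, hsc, hspan, hs⟩ := exists_linearIndependent (Subring.center A) (Set.range c)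
  have : Fintype s := ((Set.finite_range c).subset hsc).fintype
  have hmem : ∀ i, c i ∈ Submodule.span (Subring.center A) (Set.range ((↑) : s → B)) := by
    intro i
    rw [Subtype.range_coe, hspan]
    exact Submodule.subset_span ⟨i, rfl⟩
  choose z hz using fun i => (Submodule.mem_span_range_iff_exists_fun _).mp (hmem i)
  have hcoeff : ∀ b : s, ∑ i, (z i b : A) * v i = 0 := by
    refine congrFun (eq_zero_of_sum_map_mul_eq_zero_left (c := ((↑) : s → B))
      (fun b => Set.range_subset_iff.mpr hc (hsc b.2))
      (fun w hw => funext (Fintype.linearIndependent_iff.mp hs w hw)) ?_)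
    calc ∑ b : s, φ (∑ i, (z i b : A) * v i) * b
        = ∑ i, φ (v i) * ∑ b : s, z i b • (b : B) := by
          simp only [map_sum, sum_mul, mul_sum]
          rw [sum_comm]
          refine sum_congr rfl fun i _ => sum_congr rfl fun b _ => ?_
          rw [(z i b).2.comm (v i), map_mul, mul_assoc]
          rfl
      _ = 0 := by simp only [hz, h]
  ext i
  rw [← hz i]
  have hzero : ∀ b, z i b = 0 := fun b =>
    Fintype.linearIndependent_iff.mp hv (fun i => z i b)
      (by simpa [Subring.smul_def] using hcoeff b) i
  simp [hzero]

end

theorem linearIndependent_map_mul_of_mem_centralizer {A C ι κ : Type*} [DivisionRing A]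
    [DivisionRing C] [Fintype ι] [Fintype κ] {φ : A →+* C} {v : ι → A}
    (hv : LinearIndependent (Subring.center A) v) {x : κ → C}
    (hx : LinearIndependent (Subring.center C) x)
    (hxφ : ∀ j, x j ∈ Subring.centralizer (Set.range φ)) :
    LinearIndependent (Subring.center C) fun p : ι × κ => φ (v p.1) * x p.2 := by
  rw [Fintype.linearIndependent_iff]
  intro g hg p
  have hinner : (fun i => ∑ j, (g (i, j) : C) * x j) = 0 := by
    refine eq_zero_of_sum_map_mul_eq_zero_right (φ := φ) hv (fun i => ?_) ?_
    · exact Subring.sum_mem _ fun j _ =>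
        Subring.mul_mem _ (Subring.center_le_centralizer _ (g (i, j)).2) (hxφ j)
    · rw [← hg, Fintype.sum_prod_type]
      refine sum_congr rfl fun i _ => ?_
      rw [mul_sum]
      refine sum_congr rfl fun j _ => ?_
      rw [Subring.smul_def, smul_eq_mul, ← mul_assoc, ← mul_assoc, (g (i, j)).2.comm (φ (v i))]
  exact Fintype.linearIndependent_iff.mp hx (fun j => g (p.1, j))
      (by simpa [Subring.smul_def] using congrFun hinner p.1) p.2

theorem linearIndependent_one_of_notMem_center {C : Type*} [DivisionRing C] {x : C}
    (hx : x ∉ Subring.center C) : LinearIndependent (Subring.center C) ![1, x] := by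
  rw [LinearIndependent.pair_iff' one_ne_zero]
  rintro a rfl
  exact hx (by simp [Subring.smul_def])

theorem stmt0_general (k : Type*) [Field k] (D₁ D₂ : Type*) [DivisionRing D₁] [DivisionRing D₂]
    [Algebra k D₁] [Algebra k D₂]
    [FiniteDimensional (Subring.center D₁) D₁] [FiniteDimensional (Subring.center D₂) D₂]
    (hdim : Module.finrank (Subring.center D₁) D₁ = Module.finrank (Subring.center D₂) D₂)
    (φ : D₁ →ₐ[k] D₂) :
    ∀ a ∈ Subring.center D₁, φ a ∈ Subring.center D₂ := by
  intro a ha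
  by_contra hφa
  have hcentralizer : ∀ j, ![1, φ a] j ∈ Subring.centralizer (Set.range (φ : D₁ →+* D₂)) := by
    rw [Fin.forall_fin_two]
    refine ⟨Subring.one_mem _, ?_⟩
    rintro _ ⟨d, rfl⟩
    change φ d * φ a = φ a * φ d
    rw [← map_mul, ← map_mul, ha.comm]
  have hindep := linearIndependent_map_mul_of_mem_centralizer
    (Module.finBasis (Subring.center D₁) D₁).linearIndependent
    (linearIndependent_one_of_notMem_center hφa) hcentralizer
  have hle := hindep.fintype_card_le_finrank
  have hpos : 0 < Module.finrank (Subring.center D₁) D₁ := Module.finrank_pos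
  simp only [Fintype.card_prod, Fintype.card_fin] at hle
  omega

/-- If `D₁` and `D₂` are division rings that are `k`-algebras, each
finite-dimensional over its centre and with equal dimensions over their centres, then any
injective `k`-algebra homomorphism `φ : D₁ →ₐ[k] D₂` maps the centre of `D₁` into the
centre of `D₂`. -/
theorem stmt0 (k : Type*) [Field k] (D₁ D₂ : Type*) [DivisionRing D₁] [DivisionRing D₂]
    [Algebra k D₁] [Algebra k D₂]
    [FiniteDimensional (Subring.center D₁) D₁] [FiniteDimensional (Subring.center D₂) D₂]
    (hdim : Module.finrank (Subring.center D₁) D₁ = Module.finrank (Subring.center D₂) D₂)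
    (φ : D₁ →ₐ[k] D₂) (hφ : Function.Injective φ) :
    ∀ a ∈ Subring.center D₁, φ a ∈ Subring.center D₂ :=
  stmt0_general k D₁ D₂ hdim φ
end

section
/- Let p be a prime number, let E be a field of characteristic p that is algebraic over its prime field 𝔽_p, and let K be a field extension of E. Suppose there exists s ∈ K that is transcendental over E such that K is a finite extension of the intermediate subfield E(s) generated by s, of degree d < p. Then [K : K^⟨p⟩] = p. -/
open IntermediateField

open Polynomial in
lemma aux_not_mem_adjoin_pow {E K : Type*} [Field E] [Field K] [Algebra E K]
    {p : ℕ} (hp : 1 < p) {t : K} (ht : Transcendental E t) : t ∉ E⟮t ^ p⟯ := by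
  intro h
  rw [mem_adjoin_simple_iff] at h
  obtain ⟨f, g, hfg⟩ := h
  have hg : (aeval (t ^ p)) g ≠ 0 := by
    intro h0
    rw [h0, div_zero] at hfg
    exact ht (hfg ▸ isAlgebraic_zero)
  have hkey : aeval t (X * expand E p g - expand E p f) = 0 := by
    have h2 : t * aeval (t ^ p) g = aeval (t ^ p) f := by
      field_simp at hfg
      linear_combination hfg
    simp only [map_sub, map_mul, aeval_X, expand_aeval, h2, sub_self]
  have hpoly : X * expand E p g - expand E p f = 0 := by
    by_contra h0
    exact ht ⟨_, h0, hkey⟩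
  have hgz : g = 0 := by
    ext n
    have := congrArg (fun q => Polynomial.coeff q (p * n + 1)) hpoly
    simp only [coeff_sub, coeff_X_mul, coeff_expand (lt_trans one_pos hp : 0 < p),
      coeff_zero] at this
    have h1 : ¬ p ∣ p * n + 1 := by
      intro hdvd
      have := (Nat.dvd_add_right (Dvd.intro n rfl)).mp hdvd
      exact Nat.lt_irrefl 1 (lt_of_lt_of_le hp (Nat.le_of_dvd one_pos this))
    rw [if_pos (Dvd.intro n rfl), if_neg h1, Nat.mul_div_cancel_left n
      (lt_trans one_pos hp), sub_zero] at this
    simpa using this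
  exact hg (by simp [hgz])

open Polynomial Module in
lemma aux_isSeparable_of_finrank_lt_char {L K : Type*} [Field L] [Field K] [Algebra L K]
    (p : ℕ) [Fact p.Prime] [CharP K p] [FiniteDimensional L K]
    (hlt : Module.finrank L K < p) : Algebra.IsSeparable L K := by
  haveI : CharP L p := (algebraMap L K).charP (algebraMap L K).injective p
  constructor
  intro x
  have hint : IsIntegral L x := IsIntegral.of_finite _ x
  have hirr := minpoly.irreducible hint
  have hndvd : ¬ p ∣ (minpoly L x).natDegree := by
    intro hdvd
    have hdvd2 : (minpoly L x).natDegree ∣ finrank L K := by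
      refine ⟨finrank (↥L⟮x⟯) K, ?_⟩
      rw [← adjoin.finrank hint]
      exact (Module.finrank_mul_finrank L (↥L⟮x⟯) K).symm
    have h0 : finrank L K ≠ 0 := Module.finrank_pos.ne'
    exact absurd hlt (not_lt.mpr (Nat.le_of_dvd (Nat.pos_of_ne_zero h0) (hdvd.trans hdvd2)))
  refine (separable_iff_derivative_ne_zero hirr).mpr ?_
  intro hder
  have hdeg := minpoly.natDegree_pos hint
  have := congrArg (fun q => Polynomial.coeff q ((minpoly L x).natDegree - 1)) hder
  simp only [coeff_derivative, coeff_zero] at this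
  rw [Nat.sub_add_cancel hdeg] at this
  rw [(minpoly.monic hint).coeff_natDegree, one_mul] at this
  rw [← Nat.cast_one (R := L), ← Nat.cast_add, Nat.sub_add_cancel hdeg] at this
  exact hndvd ((CharP.cast_eq_zero_iff L p _).mp this)

/-- If `E` is a field of characteristic `p` that is algebraic over its prime
field `𝔽_p`, and `K/E` is a field extension containing an element `s` transcendental over `E`
with `[K : E(s)] = d < p`, then `[K : K^⟨p⟩] = p`, where `K^⟨p⟩` is the image of the
Frobenius `x ↦ x^p`. -/
theorem stmt1 (p : ℕ) [Fact p.Prime] (E K : Type*) [Field E] [Field K]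
    [CharP E p] [Algebra (ZMod p) E] [Algebra.IsAlgebraic (ZMod p) E]
    [Algebra E K] [CharP K p]
    (s : K) (hs : Transcendental E s)
    [FiniteDimensional (↥E⟮s⟯) K] (d : ℕ) (hd : Module.finrank (↥E⟮s⟯) K = d) (hdp : d < p) :
    Module.finrank (↥(frobenius K p).fieldRange) K = p := by
  have hp : p.Prime := Fact.out
  haveI : ExpChar K p := ExpChar.prime hp
  haveI : ExpChar E p := ExpChar.prime hp
  haveI : PerfectField E := Algebra.IsAlgebraic.perfectField (K := ZMod p)
  haveI : PerfectRing E p := PerfectField.toPerfectRing p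
  set F : Subfield K := (frobenius K p).fieldRange with hF
  haveI hsepLK : Algebra.IsSeparable (↥E⟮s⟯) K :=
    aux_isSeparable_of_finrank_lt_char p (hd ▸ hdp)
  haveI : CharP (↥E⟮s⟯) p :=
    (algebraMap (↥E⟮s⟯) K).charP (algebraMap (↥E⟮s⟯) K).injective p
  haveI : ExpChar (↥E⟮s⟯) p := ExpChar.prime hp
  have hEF : ∀ e : E, algebraMap E K e ∈ F := by
    intro e
    obtain ⟨e', he'⟩ := surjective_frobenius E p e
    refine RingHom.mem_fieldRange.mpr ⟨algebraMap E K e', ?_⟩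
    rw [← he', frobenius_def, frobenius_def, map_pow]
  have hsL : s ∈ E⟮s⟯ := mem_adjoin_simple_self E s
  have hsF : s ∉ F := by
    rintro hmem
    obtain ⟨t, ht⟩ := RingHom.mem_fieldRange.mp hmem
    rw [frobenius_def] at ht
    have htr : Transcendental E t := by
      intro halg
      exact hs (ht ▸ (halg.isIntegral.pow p).isAlgebraic)
    have h1 : adjoin (↥E⟮s⟯) {t} = adjoin (↥E⟮s⟯) {t ^ p} := by
      have h := adjoin_eq_adjoin_pow_expChar_pow_of_isSeparable' (F := ↥E⟮s⟯) (E := K) {t} p 1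
      simpa [pow_one, Set.image_singleton] using h
    have hbot : adjoin (↥E⟮s⟯) {t ^ p} = ⊥ := by
      rw [adjoin_simple_eq_bot_iff, mem_bot]
      exact ⟨⟨t ^ p, ht ▸ hsL⟩, rfl⟩
    have htL : t ∈ E⟮s⟯ := by
      have h2 : t ∈ adjoin (↥E⟮s⟯) {t} := mem_adjoin_simple_self _ t
      rw [h1, hbot, mem_bot] at h2
      obtain ⟨l, hl⟩ := h2
      exact hl ▸ l.2
    exact aux_not_mem_adjoin_pow hp.one_lt htr (by rwa [ht])
  set a : ↥F := ⟨s ^ p, RingHom.mem_fieldRange.mpr ⟨s, rfl⟩⟩ with ha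
  have hane : ∀ b : ↥F, b ^ p ≠ a := by
    intro b hb
    have hb' : (b : K) ^ p = s ^ p := congrArg Subtype.val hb
    obtain ⟨c, hc⟩ := RingHom.mem_fieldRange.mp b.2
    rw [frobenius_def] at hc
    have : c ^ p = s := by
      apply frobenius_inj K p
      rw [frobenius_def, frobenius_def, ← hb', hc]
    exact hsF (this ▸ RingHom.mem_fieldRange.mpr ⟨c, rfl⟩)
  have hirr : Irreducible (Polynomial.X ^ p - Polynomial.C a) :=
    X_pow_sub_C_irreducible_of_prime hp hane
  have hmonic : (Polynomial.X ^ p - Polynomial.C a).Monic :=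
    Polynomial.monic_X_pow_sub_C a hp.ne_zero
  have hroot : Polynomial.aeval s (Polynomial.X ^ p - Polynomial.C a) = 0 := by
    have haK : algebraMap (↥F) K a = s ^ p := rfl
    simp [haK]
  have hint : IsIntegral (↥F) s := ⟨_, hmonic, by simpa [Polynomial.aeval_def] using hroot⟩
  have hmin : minpoly (↥F) s = Polynomial.X ^ p - Polynomial.C a :=
    (minpoly.eq_of_irreducible_of_monic hirr hroot hmonic).symm
  have hT : adjoin (↥F) {s} = ⊤ := by
    rw [eq_top_iff]
    rintro x -
    have hFT : ∀ y : K, y ∈ F → y ∈ adjoin (↥F) {s} := by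
      intro y hy
      exact (adjoin (↥F) {s}).algebraMap_mem ⟨y, hy⟩
    have hLT : ∀ y : K, y ∈ E⟮s⟯ → y ∈ adjoin (↥F) {s} := by
      intro y hy
      induction hy using adjoin_induction with
      | mem z hz =>
        rw [Set.mem_singleton_iff] at hz
        exact hz ▸ subset_adjoin _ _ rfl
      | algebraMap e => exact hFT _ (hEF e)
      | add x y _ _ hx hy => exact add_mem hx hy
      | inv x _ hx => exact inv_mem hx
      | mul x y _ _ hx hy => exact mul_mem hx hy
    have hx1 : x ∈ adjoin (↥E⟮s⟯) {x ^ p} := by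
      have h := adjoin_eq_adjoin_pow_expChar_pow_of_isSeparable' (F := ↥E⟮s⟯) (E := K) {x} p 1
      rw [Set.image_singleton, pow_one] at h
      exact h ▸ mem_adjoin_simple_self _ x
    refine adjoin_induction (F := ↥E⟮s⟯) (p := fun y _ => y ∈ adjoin (↥F) {s}) (fun z hz => ?_) (fun l => hLT _ l.2)
      (fun u v _ _ hu hv => add_mem hu hv) (fun u _ hu => inv_mem hu)
      (fun u v _ _ hu hv => mul_mem hu hv) hx1
    rw [Set.mem_singleton_iff] at hz
    exact hz ▸ hFT _ (RingHom.mem_fieldRange.mpr ⟨x, rfl⟩)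
  rw [← IntermediateField.finrank_top' (F := ↥F) (E := K), ← hT,
    IntermediateField.adjoin.finrank hint, hmin, Polynomial.natDegree_X_pow_sub_C]
end

section
/- Let p be a prime number, let R be a commutative ring, and let A be a commutative R-algebra of characteristic p (i.e. p · 1 = 0 in A). If D : A → A is an R-linear derivation of A, then the p-fold iterate D^p (the composition of D with itself p times) is again an R-linear derivation of A; in particular it satisfies the Leibniz rule D^p(ab) = a · D^p(b) + D^p(a) · b for all a, b ∈ A. -/
/-!
Write `L_x`, `R_x` for left and right multiplication, and let `ad_x = L_x - R_x`. Inside `End_R(A)`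
the commutator of `D` with `L_a` is `L_{D a}`, so `(ad_D)ⁿ (L_a) = L_{Dⁿ a}`. Since `L_D` and `R_D`
commute, in characteristic `p` the Frobenius gives `(ad_D)ᵖ = ad_{Dᵖ}`; hence `[Dᵖ, L_a] = L_{Dᵖ a}`,
which evaluated at `b` is the Leibniz rule for `Dᵖ`.
-/

open LinearMap

section

variable {R : Type*} [CommRing R]

instance Module.End.expChar_of_algebra {S : Type*} [Ring S] [Algebra R S] (p : ℕ)
    [ExpChar S p] : ExpChar (Module.End R S) p :=
  expChar_of_injective_ringHom (f := (Algebra.lmul R S).toRingHom) Algebra.lmul_injective p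

theorem LinearMap.mulLeft_sub_mulRight_pow_expChar {S : Type*} [Ring S] [Algebra R S] (p : ℕ)
    [ExpChar S p] (x : S) :
    (mulLeft R x - mulRight R x) ^ p = mulLeft R (x ^ p) - mulRight R (x ^ p) := by
  rw [sub_pow_expChar_of_commute _ (commute_mulLeft_right x x), pow_mulLeft, pow_mulRight]

namespace Derivation

variable {A : Type*} [CommRing A] [Algebra R A]

theorem mulLeft_sub_mulRight_apply_mulLeft (D : Derivation R A A) (a : A) :
    (mulLeft R (D : Module.End R A) - mulRight R (D : Module.End R A)) (mulLeft R a) =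
      mulLeft R (D a) := by
  ext b
  simp only [LinearMap.sub_apply, mulLeft_apply, mulRight_apply, Module.End.mul_apply, coeFn_coe,
    D.leibniz, smul_eq_mul, add_sub_cancel_left]
  exact mul_comm b (D a)

theorem mulLeft_sub_mulRight_pow_apply_mulLeft (D : Derivation R A A) (n : ℕ) (a : A) :
    ((mulLeft R (D : Module.End R A) - mulRight R (D : Module.End R A)) ^ n) (mulLeft R a) =
      mulLeft R (D^[n] a) := by
  induction n generalizing a with
  | zero => rfl
  | succ n ih =>
    rw [pow_succ, Module.End.mul_apply, mulLeft_sub_mulRight_apply_mulLeft, ih,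
      Function.iterate_succ_apply]

theorem iterate_expChar_leibniz (p : ℕ) [ExpChar A p] (D : Derivation R A A) (a b : A) :
    D^[p] (a * b) = a * D^[p] b + D^[p] a * b := by
  have h := congr($(D.mulLeft_sub_mulRight_pow_apply_mulLeft p a) b)
  rw [mulLeft_sub_mulRight_pow_expChar] at h
  simp only [LinearMap.sub_apply, mulLeft_apply, mulRight_apply, Module.End.mul_apply,
    Module.End.pow_apply, coeFn_coe] at h
  linear_combination h

def iterateExpChar (p : ℕ) [ExpChar A p] (D : Derivation R A A) : Derivation R A A :=
  mk' ((D : Module.End R A) ^ p) fun a b => by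
    simp only [Module.End.pow_apply, coeFn_coe, iterate_expChar_leibniz, smul_eq_mul]
    ring

theorem coe_iterateExpChar (p : ℕ) [ExpChar A p] (D : Derivation R A A) :
    ⇑(D.iterateExpChar p) = (⇑D)^[p] :=
  Module.End.coe_pow _ p

end Derivation

end

/-- If `A` is a commutative `R`-algebra of characteristic `p` (`p` prime)
and `D : A → A` is an `R`-linear derivation, then the `p`-fold iterate `D^[p]` is again an
`R`-linear derivation of `A`; in particular it satisfies the Leibniz rule. -/
theorem stmt5 (p : ℕ) [Fact p.Prime] (R A : Type*) [CommRing R] [CommRing A] [Algebra R A]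
    [CharP A p] (D : Derivation R A A) :
    ∃ D' : Derivation R A A, (⇑D' = (⇑D)^[p]) ∧
      ∀ a b : A, (⇑D)^[p] (a * b) = a * (⇑D)^[p] b + (⇑D)^[p] a * b :=
  ⟨D.iterateExpChar p, D.coe_iterateExpChar p, D.iterate_expChar_leibniz p⟩
end

section
/- Let p be a prime number, let E ⊆ K be fields of characteristic p, and let s ∈ K be transcendental over E such that K is a finite separable extension of the intermediate field E(s) generated by s. If δ : K → K is an E-linear derivation with δ(s) = 1, then the p-fold iterate δ^p is identically zero on K. -/
open IntermediateField

open Finset in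
private lemma deriv_iterate_leibniz {R A : Type*} [CommRing R] [CommRing A] [Algebra R A]
    (δ : Derivation R A A) (n : ℕ) (a b : A) :
    (⇑δ)^[n] (a * b) =
      ∑ k ∈ range n.succ, (n.choose k • ((⇑δ)^[n - k] a * (⇑δ)^[k] b)) := by
  induction n with
  | zero => simp [Finset.range]
  | succ n IH =>
    calc
      (⇑δ)^[n + 1] (a * b) =
          δ (∑ k ∈ range n.succ,
              n.choose k • ((⇑δ)^[n - k] a * (⇑δ)^[k] b)) := by
        rw [Function.iterate_succ_apply', IH]
      _ = (∑ k ∈ range n.succ,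
            n.choose k • ((⇑δ)^[n - k + 1] a * (⇑δ)^[k] b)) +
          ∑ k ∈ range n.succ,
            n.choose k • ((⇑δ)^[n - k] a * (⇑δ)^[k + 1] b) := by
        rw [map_sum, ← sum_add_distrib]
        refine sum_congr rfl fun k _ => ?_
        rw [map_nsmul, δ.leibniz, smul_eq_mul, smul_eq_mul, Function.iterate_succ_apply',
          Function.iterate_succ_apply', smul_add]
        ring_nf
      _ = (∑ k ∈ range n.succ,
                n.choose k.succ • ((⇑δ)^[n - k] a * (⇑δ)^[k + 1] b)) +
              1 • ((⇑δ)^[n + 1] a * (⇑δ)^[0] b) +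
            ∑ k ∈ range n.succ, n.choose k • ((⇑δ)^[n - k] a * (⇑δ)^[k + 1] b) :=
        ?_
      _ = ((∑ k ∈ range n.succ, n.choose k • ((⇑δ)^[n - k] a * (⇑δ)^[k + 1] b)) +
              ∑ k ∈ range n.succ,
                n.choose k.succ • ((⇑δ)^[n - k] a * (⇑δ)^[k + 1] b)) +
            1 • ((⇑δ)^[n + 1] a * (⇑δ)^[0] b) := by
        rw [add_comm, add_assoc]
      _ = (∑ i ∈ range n.succ,
              (n + 1).choose (i + 1) • ((⇑δ)^[n + 1 - (i + 1)] a * (⇑δ)^[i + 1] b)) +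
            1 • ((⇑δ)^[n + 1] a * (⇑δ)^[0] b) := by
        simp_rw [Nat.choose_succ_succ, Nat.succ_sub_succ, add_smul, sum_add_distrib]
      _ = ∑ k ∈ range n.succ.succ,
            n.succ.choose k • ((⇑δ)^[n.succ - k] a * (⇑δ)^[k] b) := by
        rw [sum_range_succ' _ n.succ, Nat.choose_zero_right, tsub_zero]
    congr
    refine (sum_range_succ' _ _).trans (congr_arg₂ (· + ·) ?_ ?_)
    · rw [sum_range_succ, Nat.choose_succ_self, zero_smul, add_zero]
      refine sum_congr rfl fun k hk => ?_
      rw [mem_range] at hk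
      congr
      omega
    · rw [Nat.choose_zero_right, tsub_zero]

/-- Let `E ⊆ K` be fields of characteristic `p`, and let `s ∈ K` be
transcendental over `E` with `K/E(s)` finite and separable. If `δ` is an `E`-linear
derivation of `K` with `δ s = 1`, then the `p`-fold iterate `δ^[p]` vanishes on `K`. -/
theorem stmt8 (p : ℕ) [Fact p.Prime] (E K : Type*) [Field E] [Field K] [Algebra E K]
    [CharP E p] [CharP K p] (s : K) (hs : Transcendental E s)
    [FiniteDimensional (↥E⟮s⟯) K] [Algebra.IsSeparable (↥E⟮s⟯) K]
    (δ : Derivation E K K) (hδs : δ s = 1) :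
    ∀ x : K, (⇑δ)^[p] x = 0 := by
  have hp : p.Prime := Fact.out
  -- the p-fold iterate satisfies Leibniz in characteristic p
  have hmid : ∀ a b : K, (⇑δ)^[p] (a * b) = a * (⇑δ)^[p] b + (⇑δ)^[p] a * b := by
    intro a b
    rw [deriv_iterate_leibniz, Finset.sum_range_succ,
      Finset.sum_eq_single_of_mem 0 (Finset.mem_range.mpr hp.pos)]
    · simp [add_comm ((⇑δ)^[p] a * b)]
    · intro k hk hk0
      rw [Finset.mem_range] at hk
      have hdvd : p ∣ p.choose k := hp.dvd_choose_self hk0 hk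
      rw [nsmul_eq_mul, (CharP.cast_eq_zero_iff K p _).mpr hdvd, zero_mul]
  -- `δ^[p]` is an `E`-linear map
  have hL : ∀ x : K, (δ.toLinearMap ^ p) x = (⇑δ)^[p] x := fun x =>
    Module.End.pow_apply _ _ _
  have hone : (⇑δ)^[p] (1 : K) = 0 := by
    obtain ⟨q, rfl⟩ : ∃ q, p = q + 1 := ⟨p - 1, by have := hp.pos; omega⟩
    rw [Function.iterate_succ_apply, δ.map_one_eq_zero, Function.iterate_fixed δ.map_zero]
  -- build the derivation D = δ^[p]
  set D : Derivation E K K :=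
    { toLinearMap := δ.toLinearMap ^ p
      map_one_eq_zero' := by simpa [hL] using hone
      leibniz' := fun a b => by
        simp only [hL, smul_eq_mul]
        rw [hmid a b]; ring } with hD
  have hDapp : ∀ x : K, D x = (⇑δ)^[p] x := hL
  have hDs : D s = 0 := by
    rw [hDapp]
    obtain ⟨q, rfl⟩ : ∃ q, p = q + 2 := ⟨p - 2, by have := hp.two_le; omega⟩
    rw [Function.iterate_succ_apply, hδs, Function.iterate_succ_apply, δ.map_one_eq_zero,
      Function.iterate_fixed δ.map_zero]
  -- D vanishes on E⟮s⟯
  have hDfield : ∀ x : K, x ∈ E⟮s⟯ → D x = 0 := by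
    intro x hx
    obtain ⟨P, Q, rfl⟩ := (mem_adjoin_simple_iff E x).mp hx
    have hP : ∀ R : Polynomial E, D (Polynomial.aeval s R) = 0 := fun R => by
      rw [D.map_aeval, hDs, smul_zero]
    rw [D.leibniz_div, hP, hP, smul_zero, smul_zero, sub_zero, smul_zero]
  -- promote D to an E⟮s⟯-derivation
  have halg : ∀ c : ↥E⟮s⟯, (c : K) ∈ E⟮s⟯ := fun c => c.2
  set D₂ : Derivation (↥E⟮s⟯) K K :=
    { toFun := ⇑D
      map_add' := map_add D
      map_smul' := fun c x => by
        have hc : c • x = (c : K) * x := by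
          rw [Algebra.smul_def]; rfl
        have hc2 : c • D x = (c : K) * D x := by
          rw [Algebra.smul_def]; rfl
        simp only [RingHom.id_apply, hc, hc2, D.leibniz, smul_eq_mul,
          hDfield _ (halg c), mul_zero, add_zero]
      map_one_eq_zero' := D.map_one_eq_zero
      leibniz' := fun a b => D.leibniz a b }
  -- separability forces D₂ = 0
  haveI : Algebra.FormallyUnramified (↥E⟮s⟯) K :=
    Algebra.FormallyUnramified.of_isSeparable _ _
  haveI : Subsingleton (Derivation (↥E⟮s⟯) K K) :=
    Equiv.subsingleton (KaehlerDifferential.linearMapEquivDerivation (↥E⟮s⟯) K).symm.toEquiv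
  have hzero : D₂ = 0 := Subsingleton.elim _ _
  intro x
  rw [← hDapp x]
  have h2 : D x = D₂ x := rfl
  rw [h2, hzero]
  simp
end
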